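/- arXiv:math/0212169 — 4 statements merged into one kernel-verified Lean document; each statement's English description precedes it below -/
import Mathlib

section
/- Reye's theorem (one direction): if Z = {[L₁],…,[L_s]} ⊂ ℙV* is a set of s distinct points and the degree-4 part (I_Z)_4 of its ideal is contained in ker α_{4,F}, then F lies in the linear span of L₁⁴, …, L_s⁴. -/
open MvPolynomial

/-- The differential operator on `MvPolynomial σ ℂ` given by the monomial with
exponent vector `m`: the composite of `m i`-fold partial derivatives in each variable `i`. -/
noncomputable def diffOpMon {σ : Type*} [Fintype σ] [DecidableEq σ] (m : σ →₀ ℕ) :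
    Module.End ℂ (MvPolynomial σ ℂ) :=
  (m.toMultiset.toList.map fun i => (pderiv i).toLinearMap).prod

/-- `diffOp D F` is the result of applying the polynomial `D` (in the dual variables)
to `F` as a constant-coefficient differential operator (apolarity action). -/
noncomputable def diffOp {σ : Type*} [Fintype σ] [DecidableEq σ]
    (D F : MvPolynomial σ ℂ) : MvPolynomial σ ℂ :=
  (AddMonoidAlgebra.coeff D).sum fun m c => c • diffOpMon m F

/-- The rank of the `k`-th catalecticant of `F`: the dimension of the space spanned by all
`D(∂)F` for `D` homogeneous of degree `k`. -/
noncomputable def cataRank {σ : Type*} [Fintype σ] [DecidableEq σ]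
    (k : ℕ) (F : MvPolynomial σ ℂ) : ℕ :=
  Module.finrank ℂ
    (Submodule.span ℂ ((fun D => diffOp D F) '' {D : MvPolynomial σ ℂ | D.IsHomogeneous k}))

/-!
On forms of degree `n` the apolarity pairing `⟨D, G⟩ = D(∂)G` (a constant) is
`∑ₘ m! · coeff m D · coeff m G`, so it is perfect, and `⟨D, (a · x)ⁿ⟩ = n! · D(a)`.
If `F` were not in the span `W` of the `(pᵢ · x)ⁿ`, a linear functional vanishing on `W` but not
at `F` would be represented by some form `D` of degree `n`; then `D(pᵢ) = 0` for all `i` while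
`D(∂)F ≠ 0`.
-/

namespace MvPolynomial

open Nat

section LinearPow

variable {R σ : Type*} [CommSemiring R] [Fintype σ]

theorem isHomogeneous_linear_pow (a : σ → R) (n : ℕ) :
    ((∑ i, C (a i) * X i) ^ n).IsHomogeneous n := by
  simpa using (IsHomogeneous.sum _ _ 1 fun i _ => isHomogeneous_C_mul_X (a i) i).pow n

theorem prod_factorial_mul_coeff_linear_pow (a : σ → R) {n : ℕ} {m : σ →₀ ℕ}
    (hm : m.degree = n) :
    (∏ i, ((m i)! : R)) * coeff m ((∑ i, C (a i) * X i) ^ n) = n ! * m.prod (a · ^ ·) := by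
  have hfac : (∏ i, ((m i)! : R)) * m.multinomial = n ! := by
    rw [Finsupp.multinomial_eq_of_support_subset (Finset.subset_univ _)]
    exact_mod_cast by rw [Nat.multinomial_spec, ← Finsupp.degree_eq_sum, hm]
  simp_rw [← smul_eq_C_mul, coeff_linearCombination_X_pow_of_fintype]
  rw [if_pos (by rwa [Finsupp.degree_apply] at hm), ← mul_assoc, hfac]

end LinearPow

variable {σ : Type*} [Fintype σ] [DecidableEq σ]

theorem prod_factorial_mul_coeff_prod_pderiv {R : Type*} [CommSemiring R] (l : List σ)
    (k : σ →₀ ℕ) (G : MvPolynomial σ R) :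
    (∏ i, ((k i)! : R)) * coeff k ((l.map fun i => (pderiv i).toLinearMap).prod G) =
      (∏ i, (((k + Multiset.toFinsupp (l : Multiset σ) : σ →₀ ℕ) i)! : R)) *
        coeff (k + Multiset.toFinsupp (l : Multiset σ)) G := by
  induction l generalizing k with
  | nil => simp
  | cons j l ih =>
    have hfac : ∏ i, (((k + Finsupp.single j 1 : σ →₀ ℕ) i)! : R) =
        (∏ i, ((k i)! : R)) * (k j + 1) := by
      rw [← Finset.mul_prod_erase _ _ (Finset.mem_univ j),
        ← Finset.mul_prod_erase _ (fun i => ((k i)! : R)) (Finset.mem_univ j),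
        Finset.prod_congr rfl fun i hi => by
          rw [Finsupp.add_apply, Finsupp.single_eq_of_ne (Finset.mem_erase.1 hi).1, add_zero]]
      simp only [Finsupp.coe_add, Pi.add_apply, Finsupp.single_eq_same, factorial_succ, cast_mul,
        cast_add, cast_one]
      ring
    rw [List.map_cons, List.prod_cons, Module.End.mul_apply, Derivation.coeFn_coe, coeff_pderiv,
      ← Multiset.cons_coe, ← Multiset.singleton_add, Multiset.toFinsupp_add,
      Multiset.toFinsupp_singleton, ← add_assoc, ← ih, hfac]
    ring

theorem coeff_zero_diffOpMon (m : σ →₀ ℕ) (G : MvPolynomial σ ℂ) :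
    coeff 0 (diffOpMon m G) = (∏ i, ((m i)! : ℂ)) * coeff m G := by
  simpa [diffOpMon] using prod_factorial_mul_coeff_prod_pderiv m.toMultiset.toList 0 G

theorem coeff_zero_diffOp_of_support_subset {D : MvPolynomial σ ℂ} {s : Finset (σ →₀ ℕ)}
    (hs : D.support ⊆ s) (G : MvPolynomial σ ℂ) :
    coeff 0 (diffOp D G) = ∑ m ∈ s, coeff m D * ((∏ i, ((m i)! : ℂ)) * coeff m G) := by
  rw [← Finset.sum_subset hs fun m _ hm => by rw [notMem_support_iff.1 hm, zero_mul]]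
  change coeff 0 (∑ m ∈ D.support, coeff m D • diffOpMon m G) = _
  simp only [coeff_sum, coeff_smul, coeff_zero_diffOpMon, smul_eq_mul]

theorem coeff_zero_diffOp_linear_pow {D : MvPolynomial σ ℂ} {n : ℕ} (hD : D.IsHomogeneous n)
    (a : σ → ℂ) :
    coeff 0 (diffOp D ((∑ i, C (a i) * X i) ^ n)) = n ! * eval a D := by
  rw [coeff_zero_diffOp_of_support_subset subset_rfl, eval_eq, Finset.mul_sum]
  refine Finset.sum_congr rfl fun m hm => ?_
  rw [prod_factorial_mul_coeff_linear_pow a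
    (by rw [Finsupp.degree_eq_weight_one]; exact hD (mem_support_iff.1 hm)), Finsupp.prod]
  ring

theorem exists_isHomogeneous_coeff_zero_diffOp_eq (ℓ : Module.Dual ℂ (MvPolynomial σ ℂ))
    (n : ℕ) : ∃ D : MvPolynomial σ ℂ, D.IsHomogeneous n ∧
      ∀ G : MvPolynomial σ ℂ, G.IsHomogeneous n → coeff 0 (diffOp D G) = ℓ G := by
  set T := (Finset.univ : Finset σ).finsuppAntidiag n with hT
  have mem_T {m : σ →₀ ℕ} : m ∈ T ↔ m.degree = n := by
    simp [hT, Finset.mem_finsuppAntidiag, Finsupp.degree_eq_sum]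
  set c : (σ →₀ ℕ) → ℂ := fun m => ℓ (monomial m 1) / ∏ i, ((m i)! : ℂ)
  have hcoeff (m : σ →₀ ℕ) : coeff m (∑ k ∈ T, monomial k (c k)) = if m ∈ T then c m else 0 := by
    simp [coeff_sum, coeff_monomial]
  have hsupp {G : MvPolynomial σ ℂ} (hG : G.IsHomogeneous n) : G.support ⊆ T := fun m hm => by
    rw [mem_T, Finsupp.degree_eq_weight_one]; exact hG (mem_support_iff.1 hm)
  refine ⟨∑ m ∈ T, monomial m (c m), IsHomogeneous.sum _ _ _ fun m hm =>
    isHomogeneous_monomial _ (mem_T.1 hm), fun G hG => ?_⟩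
  have hsuppD : (∑ m ∈ T, monomial m (c m)).support ⊆ T := fun m hm => by
    by_contra h
    rw [mem_support_iff, hcoeff, if_neg h] at hm
    exact hm rfl
  have hfac (m : σ →₀ ℕ) : ∏ i, ((m i)! : ℂ) ≠ 0 :=
    Finset.prod_ne_zero_iff.2 fun i _ => Nat.cast_ne_zero.2 (factorial_ne_zero _)
  calc coeff 0 (diffOp (∑ m ∈ T, monomial m (c m)) G)
      = ∑ m ∈ T, ℓ (monomial m (coeff m G)) := by
        rw [coeff_zero_diffOp_of_support_subset hsuppD]
        refine Finset.sum_congr rfl fun m hm => ?_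
        rw [hcoeff, if_pos hm, ← mul_assoc, div_mul_cancel₀ _ (hfac m), mul_comm, ← smul_eq_mul,
          ← map_smul, smul_monomial, smul_eq_mul, mul_one]
    _ = ℓ G := by
        rw [← map_sum, ← Finset.sum_subset (hsupp hG) fun m _ hm => by
          rw [notMem_support_iff.1 hm, monomial_zero], ← as_sum]

theorem mem_span_linear_pow_of_apolar {ι : Type*} {n : ℕ} (p : ι → σ → ℂ)
    {F : MvPolynomial σ ℂ} (hF : F.IsHomogeneous n)
    (hker : ∀ D : MvPolynomial σ ℂ, D.IsHomogeneous n →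
      (∀ i, eval (p i) D = 0) → diffOp D F = 0) :
    F ∈ Submodule.span ℂ (Set.range fun i => (∑ j, C (p i j) * X j) ^ n) := by
  by_contra hFW
  obtain ⟨ℓ, hℓF, hℓW⟩ := Submodule.exists_dual_map_eq_bot_of_notMem hFW inferInstance
  obtain ⟨D, hD, hDℓ⟩ := exists_isHomogeneous_coeff_zero_diffOp_eq ℓ n
  have heval (i : ι) : eval (p i) D = 0 := by
    have hℓ_pow : ℓ ((∑ j, C (p i j) * X j) ^ n) = 0 :=
      LinearMap.le_ker_iff_map.2 hℓW (Submodule.subset_span ⟨i, rfl⟩)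
    have := coeff_zero_diffOp_linear_pow hD (p i)
    rw [hDℓ _ (isHomogeneous_linear_pow _ n), hℓ_pow, eq_comm] at this
    exact (mul_eq_zero.1 this).resolve_left (Nat.cast_ne_zero.2 (factorial_ne_zero n))
  apply hℓF
  rw [← hDℓ F hF, hker D hD heval, coeff_zero]

end MvPolynomial

theorem stmt_2_general (s : ℕ) (L : Fin s → MvPolynomial (Fin 3) ℂ) (p : Fin s → Fin 3 → ℂ)
    (hL : ∀ i, L i = ∑ j, MvPolynomial.C (p i j) * X j)
    (F : MvPolynomial (Fin 3) ℂ) (hF : F.IsHomogeneous 4)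
    (hker : ∀ D : MvPolynomial (Fin 3) ℂ, D.IsHomogeneous 4 →
      (∀ i, MvPolynomial.eval (p i) D = 0) → diffOp D F = 0) :
    ∃ c : Fin s → ℂ, F = ∑ i, c i • (L i ^ 4) := by
  obtain ⟨c, hc⟩ :=
    (Submodule.mem_span_range_iff_exists_fun ℂ).1 (mem_span_linear_pow_of_apolar p hF hker)
  exact ⟨c, by simp_rw [hL, hc]⟩

/-- Reye, one direction: if `Z = {[L₁],…,[L_s]}` are distinct points of `ℙV*`
and the degree-4 part of `I_Z` is contained in `ker α_{4,F}`, then `F` lies in the linear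
span of `L₁⁴, …, L_s⁴`. -/
theorem stmt_2 (s : ℕ) (L : Fin s → MvPolynomial (Fin 3) ℂ) (p : Fin s → Fin 3 → ℂ)
    (hp : ∀ i, p i ≠ 0)
    (hL : ∀ i, L i = ∑ j, MvPolynomial.C (p i j) * X j)
    (hdist : ∀ i j, i ≠ j → ∀ c : ℂ, p i ≠ c • p j)
    (F : MvPolynomial (Fin 3) ℂ) (hF : F.IsHomogeneous 4)
    (hker : ∀ D : MvPolynomial (Fin 3) ℂ, D.IsHomogeneous 4 →
      (∀ i, MvPolynomial.eval (p i) D = 0) → diffOp D F = 0) :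
    ∃ c : Fin s → ℂ, F = ∑ i, c i • (L i ^ 4) :=
  stmt_2_general s L p hL F hF hker
end

section
/- A general ternary quartic F has catalecticant map α_{2,F} : S_2 V → S_2 V* of full rank 6; in particular, there exists a ternary quartic whose middle catalecticant is invertible. -/
/-!
The operator `∂^m` multiplies the coefficient of `x^(n+m)` in `F` by `∏ᵢ (nᵢ + mᵢ)! / nᵢ!` and
moves it to `x^n`. Hence, indexing by the six quadratic monomials `e₁, …, e₆`, the middle
catalecticant of `F` is the matrix `γᵢⱼ f_{eᵢ+eⱼ}` with constants `γᵢⱼ ≠ 0`, and its rank is the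
dimension of the span of the `∂^{eᵢ} F`. Its determinant `Δ` is a polynomial in the coefficients
of `F`, so the rank is 6 off the hypersurface `Δ = 0`. That `Δ ≠ 0` is seen at
`x²y² + x²z² + y²z²`, whose catalecticant splits into the blocks `2(J - I)` on `x², y², z²` and
`4 I` on `xy, xz, yz`, of determinant `16 · 4³ = 1024`.
-/

open MvPolynomial

section Apolarity

variable {σ : Type*} [Fintype σ] [DecidableEq σ]

lemma coeff_list_prod_pderiv (l : List σ) (F : MvPolynomial σ ℂ) (n : σ →₀ ℕ) :
    coeff n ((l.map fun i => (pderiv i).toLinearMap).prod F) =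
      (∏ i, (n i + l.count i).descFactorial (l.count i) : ℕ) *
        coeff (n + Multiset.toFinsupp (l : Multiset σ)) F := by
  induction l generalizing n with
  | nil => simp
  | cons j t ih =>
    have hfactor : ∀ i, (n i + (j :: t).count i).descFactorial ((j :: t).count i) =
        (if i = j then n j + 1 else 1) *
          ((n + Finsupp.single j 1 : σ →₀ ℕ) i + t.count i).descFactorial (t.count i) := by
      intro i
      rcases eq_or_ne i j with rfl | hij
      · rw [List.count_cons_self, Nat.descFactorial_succ, if_pos rfl, Finsupp.add_apply,
          Finsupp.single_eq_same, show n i + (t.count i + 1) = n i + 1 + t.count i by omega,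
          Nat.add_sub_cancel]
      · simp [hij, Ne.symm hij]
    have hcons : Multiset.toFinsupp ((j :: t : List σ) : Multiset σ) =
        Finsupp.single j 1 + Multiset.toFinsupp (t : Multiset σ) := by
      rw [← Multiset.cons_coe, ← Multiset.singleton_add, Multiset.toFinsupp_add,
        Multiset.toFinsupp_singleton]
    rw [List.map_cons, List.prod_cons, Module.End.mul_apply, Derivation.coeFn_coe,
      coeff_pderiv, ih, hcons, ← add_assoc]
    simp only [hfactor, Finset.prod_mul_distrib, Finset.prod_ite_eq', Finset.mem_univ, if_true]
    push_cast
    ring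

lemma coeff_diffOpMon (m n : σ →₀ ℕ) (F : MvPolynomial σ ℂ) :
    coeff n (diffOpMon m F) =
      (∏ i, (n i + m i).descFactorial (m i) : ℕ) * coeff (n + m) F := by
  have hcount : ∀ i, m.toMultiset.toList.count i = m i := fun i => by
    rw [← Multiset.coe_count, Multiset.coe_toList, Finsupp.count_toMultiset]
  rw [diffOpMon, coeff_list_prod_pderiv, Multiset.coe_toList, Finsupp.toMultiset_toFinsupp]
  simp only [hcount]

lemma diffOp_eq_sum (D F : MvPolynomial σ ℂ) :
    diffOp D F = ∑ m ∈ D.support, coeff m D • diffOpMon m F := rfl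

lemma diffOp_monomial (m : σ →₀ ℕ) (c : ℂ) (F : MvPolynomial σ ℂ) :
    diffOp (monomial m c) F = c • diffOpMon m F := by
  rw [diffOp, MvPolynomial.sum_monomial_eq]
  simp

lemma span_diffOp_isHomogeneous (k : ℕ) (F : MvPolynomial σ ℂ) :
    Submodule.span ℂ ((fun D => diffOp D F) '' {D : MvPolynomial σ ℂ | D.IsHomogeneous k}) =
      Submodule.span ℂ ((fun m => diffOpMon m F) '' {m : σ →₀ ℕ | m.degree = k}) := by
  apply le_antisymm <;> rw [Submodule.span_le]
  · rintro _ ⟨D, hD, rfl⟩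
    dsimp only
    rw [SetLike.mem_coe, diffOp_eq_sum]
    refine Submodule.sum_mem _ fun m hm =>
      Submodule.smul_mem _ _ (Submodule.subset_span ⟨m, ?_, rfl⟩)
    rw [Set.mem_ofPred_eq, Finsupp.degree_eq_weight_one]
    exact hD (mem_support_iff.mp hm)
  · rintro _ ⟨m, hm, rfl⟩
    refine Submodule.subset_span ⟨monomial m 1, isHomogeneous_monomial 1 hm, ?_⟩
    exact (diffOp_monomial m 1 F).trans (one_smul ℂ _)

end Apolarity

lemma linearIndependent_of_det_coeff_ne_zero {σ ι R : Type*} [Fintype ι] [DecidableEq ι]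
    [Field R] (v : ι → MvPolynomial σ R) (e : ι → σ →₀ ℕ)
    (h : (Matrix.of fun i j => coeff (e j) (v i)).det ≠ 0) : LinearIndependent R v := by
  have hrows : LinearIndependent R fun i j => coeff (e j) (v i) :=
    Matrix.linearIndependent_rows_iff_isUnit.mpr
      ((Matrix.isUnit_iff_isUnit_det _).mpr h.isUnit)
  exact LinearIndependent.of_comp (LinearMap.pi fun j => lcoeff R (e j)) hrows

section Catalecticant

variable {σ ι : Type*} [Fintype σ] [DecidableEq σ]

noncomputable def catalecticantMatrix (e : ι → σ →₀ ℕ) (F : MvPolynomial σ ℂ) :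
    Matrix ι ι ℂ :=
  Matrix.of fun i j => coeff (e j) (diffOpMon (e i) F)

lemma catalecticantMatrix_apply (e : ι → σ →₀ ℕ) (F : MvPolynomial σ ℂ) (i j : ι) :
    catalecticantMatrix e F i j =
      (∏ k, (e j k + e i k).descFactorial (e i k) : ℕ) * coeff (e j + e i) F :=
  coeff_diffOpMon _ _ _

lemma cataRank_eq_card_of_det_ne_zero [Fintype ι] [DecidableEq ι] {k : ℕ} {e : ι → σ →₀ ℕ}
    (he : Set.range e = {m | m.degree = k}) {F : MvPolynomial σ ℂ}
    (h : (catalecticantMatrix e F).det ≠ 0) : cataRank k F = Fintype.card ι := by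
  rw [cataRank, span_diffOp_isHomogeneous, ← he, ← Set.range_comp]
  exact finrank_span_eq_card
    (linearIndependent_of_det_coeff_ne_zero (fun i => diffOpMon (e i) F) e h)

noncomputable def catalecticantDet [Fintype ι] [DecidableEq ι] (e : ι → σ →₀ ℕ)
    {P : (σ →₀ ℕ) → Prop} (hP : ∀ i j, P (e j + e i)) : MvPolynomial {m // P m} ℂ :=
  (Matrix.of fun i j =>
    C ((∏ k, (e j k + e i k).descFactorial (e i k) : ℕ) : ℂ) * X ⟨e j + e i, hP i j⟩).det

lemma eval_catalecticantDet [Fintype ι] [DecidableEq ι] (e : ι → σ →₀ ℕ)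
    {P : (σ →₀ ℕ) → Prop} (hP : ∀ i j, P (e j + e i)) (F : MvPolynomial σ ℂ) :
    eval (fun m => coeff m.1 F) (catalecticantDet e hP) = (catalecticantMatrix e F).det := by
  rw [catalecticantDet, RingHom.map_det]
  congr 1
  ext i j
  simp [catalecticantMatrix_apply]

end Catalecticant

def quadTable : Fin 6 → Fin 3 → ℕ :=
  ![![2, 0, 0], ![0, 2, 0], ![0, 0, 2], ![1, 1, 0], ![1, 0, 1], ![0, 1, 1]]

noncomputable def quadExps (i : Fin 6) : Fin 3 →₀ ℕ :=
  Finsupp.equivFunOnFinite.symm (quadTable i)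

lemma quadExps_apply (i : Fin 6) (k : Fin 3) : quadExps i k = quadTable i k := rfl

lemma degree_fin_three (m : Fin 3 →₀ ℕ) : m.degree = m 0 + m 1 + m 2 := by
  rw [Finsupp.degree_eq_sum, Fin.sum_univ_three]

lemma range_quadExps : Set.range quadExps = {m : Fin 3 →₀ ℕ | m.degree = 2} := by
  ext m
  rw [Set.mem_ofPred_eq, degree_fin_three]
  constructor
  · rintro ⟨i, rfl⟩
    simp only [quadExps_apply]
    revert i
    decide
  · intro hm
    have hsolutions : ∀ a < 3, ∀ b < 3, ∀ c < 3, a + b + c = 2 → ∃ i, quadTable i = ![a, b, c] := by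
      decide
    obtain ⟨i, hi⟩ := hsolutions (m 0) (by omega) (m 1) (by omega) (m 2) (by omega) hm
    refine ⟨i, Finsupp.ext fun k => ?_⟩
    rw [quadExps_apply, hi]
    fin_cases k <;> rfl

lemma quadExps_add_sum (i j : Fin 6) :
    (quadExps j + quadExps i) 0 + (quadExps j + quadExps i) 1 + (quadExps j + quadExps i) 2 =
      4 := by
  simp only [Finsupp.add_apply, quadExps_apply]
  revert i j
  decide

noncomputable def pairwiseSquareQuartic : MvPolynomial (Fin 3) ℂ :=
  X 0 ^ 2 * X 1 ^ 2 + X 0 ^ 2 * X 2 ^ 2 + X 1 ^ 2 * X 2 ^ 2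

lemma pairwiseSquareQuartic_isHomogeneous : pairwiseSquareQuartic.IsHomogeneous 4 := by
  have h (a b : Fin 3) : (X a ^ 2 * X b ^ 2 : MvPolynomial (Fin 3) ℂ).IsHomogeneous 4 :=
    ((isHomogeneous_X ℂ a).pow 2).mul ((isHomogeneous_X ℂ b).pow 2)
  exact ((h 0 1).add (h 0 2)).add (h 1 2)

lemma catalecticantMatrix_pairwiseSquareQuartic :
    catalecticantMatrix quadExps pairwiseSquareQuartic =
      !![0, 2, 2, 0, 0, 0; 2, 0, 2, 0, 0, 0; 2, 2, 0, 0, 0, 0;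
        0, 0, 0, 4, 0, 0; 0, 0, 0, 0, 4, 0; 0, 0, 0, 0, 0, 4] := by
  ext i j
  rw [catalecticantMatrix_apply]
  simp only [pairwiseSquareQuartic, X_pow_eq_monomial, monomial_mul, coeff_add, coeff_monomial,
    one_mul]
  fin_cases i <;> fin_cases j <;>
    simp [Finsupp.ext_iff, Fin.forall_fin_succ, quadExps_apply, quadTable, Finsupp.single_apply,
      Fin.prod_univ_three]

lemma det_catalecticantMatrix_pairwiseSquareQuartic :
    (catalecticantMatrix quadExps pairwiseSquareQuartic).det = 1024 := by
  rw [catalecticantMatrix_pairwiseSquareQuartic]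
  simp [Matrix.det_succ_row_zero, Fin.sum_univ_succ, Fin.succAbove]
  norm_num

/-- a general ternary quartic has middle catalecticant of full rank 6
(the locus where this fails is cut out by a nonzero polynomial in the coefficients);
in particular there exists a ternary quartic with invertible middle catalecticant. -/
theorem stmt_5 :
    (∃ Δ : MvPolynomial {m : Fin 3 →₀ ℕ // m 0 + m 1 + m 2 = 4} ℂ, Δ ≠ 0 ∧
      ∀ F : MvPolynomial (Fin 3) ℂ, F.IsHomogeneous 4 →
        MvPolynomial.eval (fun m => MvPolynomial.coeff m.1 F) Δ ≠ 0 → cataRank 2 F = 6) ∧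
    (∃ F : MvPolynomial (Fin 3) ℂ, F.IsHomogeneous 4 ∧ cataRank 2 F = 6) := by
  have hrank (F : MvPolynomial (Fin 3) ℂ) (h : (catalecticantMatrix quadExps F).det ≠ 0) :
      cataRank 2 F = 6 :=
    cataRank_eq_card_of_det_ne_zero range_quadExps h
  have hwitness : (catalecticantMatrix quadExps pairwiseSquareQuartic).det ≠ 0 := by
    rw [det_catalecticantMatrix_pairwiseSquareQuartic]
    norm_num
  have heval := eval_catalecticantDet (P := fun m : Fin 3 →₀ ℕ => m 0 + m 1 + m 2 = 4)
    quadExps quadExps_add_sum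
  refine ⟨⟨catalecticantDet quadExps quadExps_add_sum, fun hΔ => hwitness ?_, fun F _ hF => ?_⟩,
    ⟨pairwiseSquareQuartic, pairwiseSquareQuartic_isHomogeneous, hrank _ hwitness⟩⟩
  · rw [← heval, hΔ, map_zero]
  · exact hrank F (heval F ▸ hF)
end

section
/- A ternary quartic of the form F = L₁³L₂, where L₁, L₂ are linearly independent linear forms, cannot be written as c₁M₁⁴ + c₂M₂⁴ for linear forms M₁, M₂ and scalars c₁, c₂. -/
/-!
Choose points `d, e` with `L₂(d) = 0 ≠ L₁(d)` and `L₁(e) = 0 ≠ L₂(e)`, which exist because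
neither form is a multiple of the other. On the line `t ↦ t d + e` the quartic `L₁³L₂` becomes
`u t³` with `u ≠ 0`, while each `Mᵢ⁴` becomes `(aᵢ t + bᵢ)⁴`. Comparing the coefficients of
`t³`, `t` and `1` in `u t³ = c₁ (a₁ t + b₁)⁴ + c₂ (a₂ t + b₂)⁴` forces `u = 0`.
-/

open MvPolynomial

theorem eq_zero_of_coeffs_sum_two_fourth_powers {R : Type*} [CommRing R] [IsDomain R]
    {u c₁ c₂ a₁ b₁ a₂ b₂ : R}
    (h₃ : c₁ * (4 * a₁ ^ 3 * b₁) + c₂ * (4 * a₂ ^ 3 * b₂) = u)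
    (h₁ : c₁ * (4 * a₁ * b₁ ^ 3) + c₂ * (4 * a₂ * b₂ ^ 3) = 0)
    (h₀ : c₁ * b₁ ^ 4 + c₂ * b₂ ^ 4 = 0) : u = 0 := by
  by_cases hdet : a₁ * b₂ - a₂ * b₁ = 0
  · -- `a₁³ b₂³ = a₂³ b₁³` turns `bᵢ³ u` into a multiple of `h₀`
    by_contra hu
    have hb₁ : b₁ = 0 := by
      refine (pow_eq_zero_iff three_ne_zero).1 <|
        (mul_eq_zero.1 (?_ : u * b₁ ^ 3 = 0)).resolve_left hu
      linear_combination -b₁ ^ 3 * h₃ + 4 * a₁ ^ 3 * h₀ -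
        4 * c₂ * b₂ * (a₁ ^ 2 * b₂ ^ 2 + a₁ * a₂ * b₁ * b₂ + a₂ ^ 2 * b₁ ^ 2) * hdet
    have hb₂ : b₂ = 0 := by
      refine (pow_eq_zero_iff three_ne_zero).1 <|
        (mul_eq_zero.1 (?_ : u * b₂ ^ 3 = 0)).resolve_left hu
      linear_combination -b₂ ^ 3 * h₃ + 4 * a₂ ^ 3 * h₀ +
        4 * c₁ * b₁ * (a₁ ^ 2 * b₂ ^ 2 + a₁ * a₂ * b₁ * b₂ + a₂ ^ 2 * b₁ ^ 2) * hdet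
    exact hu (by rw [← h₃, hb₁, hb₂]; ring)
  · -- `(cᵢ bᵢ³)ᵢ` solves a linear system with determinant `a₁ b₂ - a₂ b₁`
    have hc₁ : (4 * c₁ * b₁) ^ 3 = 0 := by
      have : (a₁ * b₂ - a₂ * b₁) * (4 * c₁ * b₁ ^ 3) = 0 := by
        linear_combination b₂ * h₁ - 4 * a₂ * h₀
      linear_combination (4 * c₁) ^ 2 * (mul_eq_zero.1 this).resolve_left hdet
    have hc₂ : (4 * c₂ * b₂) ^ 3 = 0 := by
      have : (a₁ * b₂ - a₂ * b₁) * (4 * c₂ * b₂ ^ 3) = 0 := by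
        linear_combination 4 * a₁ * h₀ - b₁ * h₁
      linear_combination (4 * c₂) ^ 2 * (mul_eq_zero.1 this).resolve_left hdet
    linear_combination -h₃ + a₁ ^ 3 * (pow_eq_zero_iff three_ne_zero).1 hc₁ +
      a₂ ^ 3 * (pow_eq_zero_iff three_ne_zero).1 hc₂

namespace Polynomial

variable {R : Type*} [CommRing R]

theorem C_mul_X_add_C_pow_four (a b : R) :
    (C a * X + C b) ^ 4 = C (a ^ 4) * X ^ 4 + C (4 * a ^ 3 * b) * X ^ 3 +
      C (6 * a ^ 2 * b ^ 2) * X ^ 2 + C (4 * a * b ^ 3) * X + C (b ^ 4) := by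
  simp only [map_mul, map_pow, map_ofNat]
  ring

variable [IsDomain R]

theorem C_mul_X_pow_three_ne_sum_two_fourth_powers {u : R} (hu : u ≠ 0)
    (c₁ c₂ a₁ b₁ a₂ b₂ : R) :
    C u * X ^ 3 ≠ C c₁ * (C a₁ * X + C b₁) ^ 4 + C c₂ * (C a₂ * X + C b₂) ^ 4 := by
  intro h
  simp only [C_mul_X_add_C_pow_four] at h
  have h₃ := congrArg (coeff · 3) h
  have h₁ := congrArg (coeff · 1) h
  have h₀ := congrArg (coeff · 0) h
  simp only [coeff_add, coeff_C_mul, coeff_X_pow, coeff_X, coeff_C] at h₃ h₁ h₀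
  norm_num at h₃ h₁ h₀
  exact hu (eq_zero_of_coeffs_sum_two_fourth_powers h₃.symm h₁.symm h₀.symm)

end Polynomial

namespace MvPolynomial.IsHomogeneous

variable {σ : Type*} [Fintype σ]

theorem exists_eq_sum_smul_X {R : Type*} [CommSemiring R] {L : MvPolynomial σ R}
    (hL : L.IsHomogeneous 1) : ∃ ℓ : σ → R, ∑ i, ℓ i • X i = L :=
  (Submodule.mem_span_range_iff_exists_fun R).1 (homogeneousSubmodule_one_eq_span_X (R := R) ▸ hL)

theorem aeval_C_mul_X_add_C {R : Type*} [CommSemiring R] {L : MvPolynomial σ R}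
    (hL : L.IsHomogeneous 1) (d e : σ → R) :
    MvPolynomial.aeval (fun i => Polynomial.C (d i) * Polynomial.X + Polynomial.C (e i)) L =
      Polynomial.C (eval d L) * Polynomial.X + Polynomial.C (eval e L) := by
  obtain ⟨ℓ, rfl⟩ := hL.exists_eq_sum_smul_X
  simp [Finset.sum_mul, Finset.sum_add_distrib, Polynomial.smul_eq_C_mul, mul_assoc]

theorem exists_eval_eq_zero_ne_zero {K : Type*} [Field K] {L₁ L₂ : MvPolynomial σ K}
    (h₁ : L₁.IsHomogeneous 1) (h₂ : L₂.IsHomogeneous 1) (h : ∀ a : K, a • L₂ ≠ L₁) :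
    ∃ d, eval d L₂ = 0 ∧ eval d L₁ ≠ 0 := by
  classical
  obtain ⟨ℓ₁, rfl⟩ := h₁.exists_eq_sum_smul_X
  obtain ⟨ℓ₂, rfl⟩ := h₂.exists_eq_sum_smul_X
  by_contra! hker
  have hspan : dotProductBilin K K ℓ₁ ∈
      Submodule.span K (Set.range fun _ : Unit => dotProductBilin K K ℓ₂) :=
    mem_span_of_iInf_ker_le_ker fun d hd => by
      simpa [dotProduct] using hker d (by simpa [dotProduct] using hd)
  obtain ⟨a, ha⟩ := Submodule.mem_span_singleton.1 (by simpa using hspan)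
  have hℓ : a • ℓ₂ = ℓ₁ :=
    _root_.funext fun i => by simpa using LinearMap.congr_fun ha (Pi.single i 1)
  exact h a (by simp [← hℓ, Finset.smul_sum, smul_smul])

end MvPolynomial.IsHomogeneous

/-- a quartic `L₁³L₂` with `L₁, L₂` linearly independent linear forms does not
lie in the span of two fourth powers of linear forms. -/
theorem stmt_9 (L₁ L₂ : MvPolynomial (Fin 3) ℂ)
    (h₁ : L₁.IsHomogeneous 1) (h₂ : L₂.IsHomogeneous 1)
    (hind : LinearIndependent ℂ ![L₁, L₂]) :
    ¬ ∃ (c₁ c₂ : ℂ) (M₁ M₂ : MvPolynomial (Fin 3) ℂ),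
        M₁.IsHomogeneous 1 ∧ M₂.IsHomogeneous 1 ∧
        L₁ ^ 3 * L₂ = c₁ • M₁ ^ 4 + c₂ • M₂ ^ 4 := by
  rintro ⟨c₁, c₂, M₁, M₂, hM₁, hM₂, heq⟩
  obtain ⟨d, hd₂, hd₁⟩ :=
    h₁.exists_eval_eq_zero_ne_zero h₂ (linearIndependent_fin2.1 hind).2
  obtain ⟨e, he₁, he₂⟩ := h₂.exists_eval_eq_zero_ne_zero h₁
    (linearIndependent_fin2.1 (LinearIndependent.pair_symm_iff.1 hind)).2
  have hline := congrArg
    (aeval fun i => Polynomial.C (d i) * Polynomial.X + Polynomial.C (e i)) heq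
  simp only [map_add, map_mul, map_pow, map_smul, h₁.aeval_C_mul_X_add_C,
    h₂.aeval_C_mul_X_add_C, hM₁.aeval_C_mul_X_add_C, hM₂.aeval_C_mul_X_add_C, hd₂, he₁,
    Polynomial.smul_eq_C_mul] at hline
  refine Polynomial.C_mul_X_pow_three_ne_sum_two_fourth_powers
    (mul_ne_zero (pow_ne_zero 3 hd₁) he₂) c₁ c₂ _ _ _ _ (Eq.trans ?_ hline)
  simp only [map_zero, map_mul, map_pow]
  ring
end

section
/- The quartic F = x₀⁴ + x₁⁴ + x₂⁴ + (x₀+x₁+x₂)⁴ has middle catalecticant α_{2,F} : S_2 V → S_2 V* of rank exactly 4. -/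
open MvPolynomial

/-!
By apolarity, `D(∂)F` for `D` homogeneous of degree two ranges over the span of the second
partials `∂ᵢ∂ⱼF`. For `F = Σ xᵢ⁴ + L⁴` with `L = Σ xᵢ` these are `12xᵢ² + 12L²` when `i = j` and
`12L²` otherwise. In three variables these four quadrics are linearly independent, as evaluating
at three points of the plane `L = 0` (where only the `12xᵢ²` survive) and at one point off it shows.
-/

lemma MvPolynomial.pderiv_pderiv_comm {σ R : Type*} [CommSemiring R] [DecidableEq σ] (i j : σ)
    (p : MvPolynomial σ R) : pderiv i (pderiv j p) = pderiv j (pderiv i p) := by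
  induction p using MvPolynomial.induction_on' with
  | monomial s a =>
      simp only [pderiv_monomial]
      rw [tsub_tsub, tsub_tsub, add_comm (Finsupp.single j 1)]
      rcases eq_or_ne i j with rfl | hij
      · rfl
      · simp only [Finsupp.tsub_apply, Finsupp.single_eq_of_ne' hij,
          Finsupp.single_eq_of_ne' hij.symm, tsub_zero]
        ring_nf
  | add p q hp hq => simp only [map_add, hp, hq]

lemma Finsupp.exists_toMultiset_eq_pair {σ : Type*} {m : σ →₀ ℕ} (hm : m.degree = 2) :
    ∃ i j, m.toMultiset = {i, j} :=
  Multiset.card_eq_two.mp (by rw [Finsupp.card_toMultiset]; exact hm)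

section Apolarity

variable {σ : Type*} [Fintype σ] [DecidableEq σ]

lemma diffOp_monomial_one (m : σ →₀ ℕ) (F : MvPolynomial σ ℂ) :
    diffOp (monomial m 1) F = diffOpMon m F := by
  simp [diffOp, show AddMonoidAlgebra.coeff (monomial m (1 : ℂ)) = Finsupp.single m 1 from rfl]

lemma diffOpMon_apply_of_toMultiset_eq_pair {m : σ →₀ ℕ} {i j : σ}
    (h : m.toMultiset = {i, j}) (F : MvPolynomial σ ℂ) :
    diffOpMon m F = pderiv i (pderiv j F) := by
  have hperm : m.toMultiset.toList.Perm [i, j] :=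
    Multiset.coe_eq_coe.mp (by rw [Multiset.coe_toList, h]; rfl)
  have hcomm : (m.toMultiset.toList.map fun k => ((pderiv k).toLinearMap :
      Module.End ℂ (MvPolynomial σ ℂ))).Pairwise Commute :=
    List.pairwise_map.mpr <| List.pairwise_of_forall fun k l =>
      LinearMap.ext fun p => pderiv_pderiv_comm k l p
  rw [diffOpMon, List.Perm.prod_eq' (hperm.map _) hcomm]
  rfl

lemma span_diffOp_homogeneous (k : ℕ) (F : MvPolynomial σ ℂ) :
    Submodule.span ℂ ((fun D => diffOp D F) '' {D | D.IsHomogeneous k}) =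
      Submodule.span ℂ ((fun m => diffOpMon m F) '' {m | m.degree = k}) := by
  apply le_antisymm <;> rw [Submodule.span_le]
  · rintro _ ⟨D, hD, rfl⟩
    refine Submodule.sum_mem _ fun m hm => Submodule.smul_mem _ _ (Submodule.subset_span ?_)
    refine ⟨m, ?_, rfl⟩
    rw [Set.mem_ofPred_eq, Finsupp.degree_eq_weight_one]
    exact hD (Finsupp.mem_support_iff.mp hm)
  · rintro _ ⟨m, hm, rfl⟩
    exact Submodule.subset_span ⟨monomial m 1, isHomogeneous_monomial _ hm, diffOp_monomial_one m F⟩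

lemma cataRank_two_eq_finrank_span_pderiv_pderiv (F : MvPolynomial σ ℂ) :
    cataRank 2 F = Module.finrank ℂ
      (Submodule.span ℂ (Set.range fun p : σ × σ => pderiv p.1 (pderiv p.2 F))) := by
  suffices h : (fun m => diffOpMon m F) '' {m | m.degree = 2} =
      Set.range fun p : σ × σ => pderiv p.1 (pderiv p.2 F) by
    rw [cataRank, span_diffOp_homogeneous, h]
  ext P
  constructor
  · rintro ⟨m, hm, rfl⟩
    obtain ⟨i, j, hij⟩ := Finsupp.exists_toMultiset_eq_pair hm
    exact ⟨(i, j), (diffOpMon_apply_of_toMultiset_eq_pair hij F).symm⟩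
  · rintro ⟨⟨i, j⟩, rfl⟩
    have hij : (Multiset.toFinsupp {i, j}).toMultiset = {i, j} :=
      Multiset.toFinsupp_toMultiset _
    refine ⟨Multiset.toFinsupp {i, j}, ?_, diffOpMon_apply_of_toMultiset_eq_pair hij F⟩
    change (Multiset.toFinsupp {i, j}).sum (fun _ => id) = 2
    rw [← Finsupp.card_toMultiset, hij]
    rfl

end Apolarity

section Caporali

variable (σ R : Type*) [Fintype σ] [CommSemiring R]

noncomputable def caporaliQuartic : MvPolynomial σ R :=
  ∑ k, X k ^ 4 + (∑ k, X k) ^ 4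

noncomputable def caporaliHessianEntry (o : Option σ) : MvPolynomial σ R :=
  o.elim 0 (fun i => 12 * X i ^ 2) + 12 * (∑ k, X k) ^ 2

variable {σ R} [DecidableEq σ]

lemma MvPolynomial.pderiv_sum_X (j : σ) : pderiv j (∑ k, X k : MvPolynomial σ R) = 1 := by
  simp [Finset.sum_pi_single']

lemma MvPolynomial.pderiv_sum_X_pow (n : ℕ) (j : σ) :
    pderiv j (∑ k, X k ^ n : MvPolynomial σ R) = (n : MvPolynomial σ R) * X j ^ (n - 1) := by
  simp [Pi.single_apply]

lemma pderiv_pderiv_caporaliQuartic (i j : σ) :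
    pderiv i (pderiv j (caporaliQuartic σ R)) =
      (if i = j then 12 * X i ^ 2 else 0) + 12 * (∑ k, X k) ^ 2 := by
  simp only [caporaliQuartic, map_add, pderiv_sum_X_pow, pderiv_pow, pderiv_sum_X, pderiv_mul,
    pderiv_X, Derivation.map_natCast, pderiv_one]
  rcases eq_or_ne i j with rfl | hij
  · simp only [Pi.single_eq_same, if_true]
    push_cast
    ring
  · simp only [Pi.single_eq_of_ne hij.symm, hij, if_false]
    push_cast
    ring

lemma range_pderiv_pderiv_caporaliQuartic [Nontrivial σ] :
    (Set.range fun p : σ × σ => pderiv p.1 (pderiv p.2 (caporaliQuartic σ R))) =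
      Set.range (caporaliHessianEntry σ R) := by
  apply subset_antisymm
  · rintro _ ⟨⟨i, j⟩, rfl⟩
    refine ⟨if i = j then some i else none, ?_⟩
    show _ = pderiv i (pderiv j _)
    rw [pderiv_pderiv_caporaliQuartic]
    split_ifs <;> rfl
  · rintro _ ⟨_ | i, rfl⟩
    · obtain ⟨a, b, hab⟩ := exists_pair_ne σ
      exact ⟨(a, b), by simp [pderiv_pderiv_caporaliQuartic, caporaliHessianEntry, hab]⟩
    · exact ⟨(i, i), by simp [pderiv_pderiv_caporaliQuartic, caporaliHessianEntry]⟩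

end Caporali

lemma linearIndependent_caporaliHessianEntry :
    LinearIndependent ℂ (caporaliHessianEntry (Fin 3) ℂ) := by
  rw [Fintype.linearIndependent_iff]
  intro g hg
  have hev (φ : Fin 3 → ℂ) : ∑ o, g o * eval φ (caporaliHessianEntry (Fin 3) ℂ o) = 0 := by
    simpa [smul_eval] using congrArg (eval φ) hg
  have e1 := hev ![1, -1, 0]
  have e2 := hev ![0, 1, -1]
  have e3 := hev ![1, 1, -2]
  have e4 := hev ![1, 0, 0]
  norm_num [caporaliHessianEntry, Fintype.sum_option, Fin.sum_univ_three, Matrix.cons_val_two,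
    Matrix.tail_cons, Matrix.head_cons] at e1 e2 e3 e4
  rintro (_ | i)
  · linear_combination e4 / 12 - e1 / 6 + e2 / 12 - (e3 - e1) / 24
  · fin_cases i
    · exact (by linear_combination e1 / 12 - e2 / 12 + (e3 - e1) / 48 : g (some 0) = 0)
    · exact (by linear_combination e2 / 12 - (e3 - e1) / 48 : g (some 1) = 0)
    · exact (by linear_combination (e3 - e1) / 48 : g (some 2) = 0)

/-- the Caporali quartic `x₀⁴ + x₁⁴ + x₂⁴ + (x₀+x₁+x₂)⁴` has middle
catalecticant of rank exactly 4. -/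
theorem stmt_14 :
    cataRank 2
      ((X 0) ^ 4 + (X 1) ^ 4 + (X 2) ^ 4 + (X 0 + X 1 + X 2) ^ 4 :
        MvPolynomial (Fin 3) ℂ) = 4 := by
  have hF : ((X 0) ^ 4 + (X 1) ^ 4 + (X 2) ^ 4 + (X 0 + X 1 + X 2) ^ 4 :
      MvPolynomial (Fin 3) ℂ) = caporaliQuartic (Fin 3) ℂ := by
    simp only [caporaliQuartic, Fin.sum_univ_three]
  rw [hF, cataRank_two_eq_finrank_span_pderiv_pderiv, range_pderiv_pderiv_caporaliQuartic,
    finrank_span_eq_card linearIndependent_caporaliHessianEntry]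
  rfl
end
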